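/- Let K, L be convex bodies in ℝ³ containing the origin in their interiors, and let μ be the surface area measure of K. Then lim_{t → +∞} F(t) = 0, where F(t) = (1/3) ∫_{S²} log((h_L(u) + t h_K(u)) / h_K(u)) h_K(u) dμ(u) − V(K) · log( (V(L + tK)/V(K))^{1/3} ) for t ≥ 0 and L + tK denotes the Minkowski sum. -/

import Mathlib

/-!
Since `L + tK = t • (K + t⁻¹L)`, the volume term equals `V(K) (log t + ⅓ log (V(K + t⁻¹L)/V(K)))`,
and `log ((h_L + t h_K)/h_K) = log t + log (1 + h_L/(t h_K))`. The two `log t` terms cancel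
because `∫ h_K dμ = 3 V(K)`, the first variation of `V(K + tK) = (1 + t)³ V(K)`. What remains
tends to `0`: the integrand `log (1 + h_L/(t h_K)) h_K` lies between `0` and `h_L/t`, and
`V(K + sL) → V(K)` as `s → 0⁺` because its difference quotient converges.
-/

open scoped Pointwise RealInnerProductSpace
open MeasureTheory Metric

noncomputable section

/-- The support function `h_K(u) = sup_{x ∈ K} ⟨x, u⟩` of a set `K ⊆ ℝ³`. -/
def supp (K : Set (EuclideanSpace ℝ (Fin 3))) (u : EuclideanSpace ℝ (Fin 3)) : ℝ :=
  sSup ((fun x => ⟪x, u⟫) '' K)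

/-- `r_o(K,L) = min_{u ∈ S²} h_K(u)/h_L(u)`. -/
def rIn (K L : Set (EuclideanSpace ℝ (Fin 3))) : ℝ :=
  sInf ((fun u => supp K u / supp L u) '' sphere (0 : EuclideanSpace ℝ (Fin 3)) 1)

/-- `R_o(K,L) = max_{u ∈ S²} h_K(u)/h_L(u)`. -/
def rOut (K L : Set (EuclideanSpace ℝ (Fin 3))) : ℝ :=
  sSup ((fun u => supp K u / supp L u) '' sphere (0 : EuclideanSpace ℝ (Fin 3)) 1)

section SupportFunction

variable {K : Set (EuclideanSpace ℝ (Fin 3))}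

theorem continuous_supp (hK : IsCompact K) : Continuous (supp K) :=
  hK.continuous_sSup (f := fun u x => ⟪x, u⟫) (continuous_snd.inner continuous_fst)

theorem inner_le_supp (hK : IsCompact K) {x : EuclideanSpace ℝ (Fin 3)} (hx : x ∈ K)
    (u : EuclideanSpace ℝ (Fin 3)) : ⟪x, u⟫ ≤ supp K u :=
  le_csSup (hK.bddAbove_image (continuous_id.inner continuous_const).continuousOn)
    (Set.mem_image_of_mem _ hx)

theorem supp_nonneg (hK : IsCompact K) (h0 : 0 ∈ K) (u : EuclideanSpace ℝ (Fin 3)) :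
    0 ≤ supp K u := by
  simpa using inner_le_supp hK h0 u

theorem supp_pos (hK : IsCompact K) (h0 : 0 ∈ interior K) {u : EuclideanSpace ℝ (Fin 3)}
    (hu : u ≠ 0) : 0 < supp K u := by
  obtain ⟨r, hr, hball⟩ := Metric.mem_nhds_iff.mp (mem_interior_iff_mem_nhds.mp h0)
  have hu' : 0 < ‖u‖ := norm_pos_iff.mpr hu
  set c := r / (2 * ‖u‖)
  have hc : 0 < c := by positivity
  have hmem : c • u ∈ K := hball <| by
    rw [mem_ball_zero_iff, norm_smul, Real.norm_of_nonneg hc.le, div_mul_eq_mul_div,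
      mul_div_mul_right _ _ hu'.ne']
    linarith
  calc 0 < c * ‖u‖ ^ 2 := by positivity
    _ = ⟪c • u, u⟫ := by rw [real_inner_smul_left, real_inner_self_eq_norm_sq]
    _ ≤ supp K u := inner_le_supp hK hmem u

theorem integrable_supp_comp_subtype (hK : IsCompact K) {S : Set (EuclideanSpace ℝ (Fin 3))}
    [CompactSpace S] (μ : Measure S) [IsFiniteMeasure μ] :
    Integrable (fun u : S => supp K u) μ :=
  ((continuous_supp hK).comp continuous_subtype_val).integrable_of_hasCompactSupport
    (.of_compactSpace _)

end SupportFunction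

open Filter Topology Module

section AddHaar

variable {E : Type*} [NormedAddCommGroup E] [NormedSpace ℝ E] [MeasurableSpace E] [BorelSpace E]
  [FiniteDimensional ℝ E] (μ : Measure E) [μ.IsAddHaarMeasure]

theorem toReal_addHaar_add_smul_self {K : Set E} (hK : Convex ℝ K) {t : ℝ} (ht : 0 ≤ t) :
    (μ (K + t • K)).toReal = (1 + t) ^ finrank ℝ E * (μ K).toReal := by
  have hsum : K + t • K = (1 + t) • K := by rw [hK.add_smul zero_le_one ht, one_smul]
  rw [hsum, Measure.addHaar_smul,
    ENNReal.toReal_mul, ENNReal.toReal_ofReal (abs_nonneg _), abs_of_nonneg (by positivity)]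

theorem tendsto_addHaar_add_smul_self_sub_div {K : Set E} (hK : Convex ℝ K) :
    Tendsto (fun t : ℝ => ((μ (K + t • K)).toReal - (μ K).toReal) / t) (𝓝[>] 0)
      (𝓝 (finrank ℝ E * (μ K).toReal)) := by
  have hderiv : HasDerivAt (fun t : ℝ => t ^ finrank ℝ E * (μ K).toReal)
      (finrank ℝ E * (μ K).toReal) 1 := by
    simpa using (hasDerivAt_pow (finrank ℝ E) (1 : ℝ)).mul_const (μ K).toReal
  refine hderiv.tendsto_slope_zero_right.congr' ?_
  filter_upwards [self_mem_nhdsWithin] with t ht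
  rw [toReal_addHaar_add_smul_self μ hK (le_of_lt ht), one_pow, one_mul, smul_eq_mul,
    div_eq_inv_mul]

theorem toReal_addHaar_add_smul_eq_pow_mul (K L : Set E) {t : ℝ} (ht : 0 < t) :
    (μ (L + t • K)).toReal = t ^ finrank ℝ E * (μ (K + t⁻¹ • L)).toReal := by
  have hset : L + t • K = t • (K + t⁻¹ • L) := by
    rw [smul_add, smul_smul, mul_inv_cancel₀ ht.ne', one_smul, add_comm]
  rw [hset, Measure.addHaar_smul, ENNReal.toReal_mul, ENNReal.toReal_ofReal (abs_nonneg _),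
    abs_of_pos (by positivity)]

end AddHaar

theorem tendsto_nhdsGT_of_tendsto_sub_div {f : ℝ → ℝ} {a b : ℝ}
    (h : Tendsto (fun s => (f s - a) / s) (𝓝[>] 0) (𝓝 b)) :
    Tendsto f (𝓝[>] 0) (𝓝 a) := by
  have hsub : Tendsto (fun s => s * ((f s - a) / s)) (𝓝[>] 0) (𝓝 (0 * b)) :=
    (tendsto_id.mono_right nhdsWithin_le_nhds).mul h
  rw [zero_mul] at hsub
  have hdiff : Tendsto (fun s => f s - a) (𝓝[>] 0) (𝓝 0) := hsub.congr' <| by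
    filter_upwards [self_mem_nhdsWithin] with s (hs : 0 < s)
    rw [mul_div_cancel₀ _ hs.ne']
  simpa using hdiff.add_const a

section LogIntegral

variable {α : Type*} [MeasurableSpace α] {μ : Measure α} {f g : α → ℝ}

theorem log_add_mul_div_mul_eq {a b t : ℝ} (ha : 0 ≤ a) (hb : 0 < b) (ht : 0 < t) :
    Real.log ((a + t * b) / b) * b = Real.log t * b + Real.log (1 + a / (t * b)) * b := by
  have hsplit : (a + t * b) / b = t * (1 + a / (t * b)) := by field_simp; ring
  rw [hsplit, Real.log_mul ht.ne' (by positivity), add_mul]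

theorem log_one_add_div_mul_nonneg {a b t : ℝ} (ha : 0 ≤ a) (hb : 0 < b) (ht : 0 < t) :
    0 ≤ Real.log (1 + a / (t * b)) * b :=
  mul_nonneg (Real.log_nonneg (le_add_of_nonneg_right (by positivity))) hb.le

theorem log_one_add_div_mul_le {a b t : ℝ} (ha : 0 ≤ a) (hb : 0 < b) (ht : 0 < t) :
    Real.log (1 + a / (t * b)) * b ≤ a / t := by
  calc Real.log (1 + a / (t * b)) * b ≤ a / (t * b) * b := by
        gcongr
        linarith [Real.log_le_sub_one_of_pos (by positivity : 0 < 1 + a / (t * b))]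
    _ = a / t := by field_simp

theorem integrable_log_one_add_div_mul (hf : Integrable f μ) (hg : AEMeasurable g μ)
    (hf0 : ∀ u, 0 ≤ f u) (hg0 : ∀ u, 0 < g u) {t : ℝ} (ht : 0 < t) :
    Integrable (fun u => Real.log (1 + f u / (t * g u)) * g u) μ := by
  refine (hf.div_const t).mono' ?_ (Eventually.of_forall fun u => ?_)
  · exact ((aemeasurable_const.add (hf.aemeasurable.div (hg.const_mul t))).log.mul
      hg).aestronglyMeasurable
  · rw [Real.norm_of_nonneg (log_one_add_div_mul_nonneg (hf0 u) (hg0 u) ht)]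
    exact log_one_add_div_mul_le (hf0 u) (hg0 u) ht

theorem integral_log_add_mul_div_mul (hf : Integrable f μ) (hg : Integrable g μ)
    (hf0 : ∀ u, 0 ≤ f u) (hg0 : ∀ u, 0 < g u) {t : ℝ} (ht : 0 < t) :
    ∫ u, Real.log ((f u + t * g u) / g u) * g u ∂μ
      = Real.log t * ∫ u, g u ∂μ + ∫ u, Real.log (1 + f u / (t * g u)) * g u ∂μ := by
  simp_rw [log_add_mul_div_mul_eq (hf0 _) (hg0 _) ht]
  rw [integral_add (hg.const_mul _)
    (integrable_log_one_add_div_mul hf hg.aemeasurable hf0 hg0 ht), integral_const_mul]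

theorem tendsto_integral_log_one_add_div_mul_atTop (hf : Integrable f μ)
    (hf0 : ∀ u, 0 ≤ f u) (hg0 : ∀ u, 0 < g u) :
    Tendsto (fun t => ∫ u, Real.log (1 + f u / (t * g u)) * g u ∂μ) atTop (𝓝 0) := by
  have hupper : Tendsto (fun t => (∫ u, f u ∂μ) / t) atTop (𝓝 0) :=
    tendsto_const_nhds.div_atTop tendsto_id
  refine tendsto_of_tendsto_of_tendsto_of_le_of_le' tendsto_const_nhds hupper ?_ ?_
  all_goals filter_upwards [eventually_gt_atTop 0] with t ht
  · exact integral_nonneg fun u => log_one_add_div_mul_nonneg (hf0 u) (hg0 u) ht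
  · rw [← integral_div]
    exact integral_mono_of_nonneg
      (Eventually.of_forall fun u => log_one_add_div_mul_nonneg (hf0 u) (hg0 u) ht)
      (hf.div_const t) (Eventually.of_forall fun u => log_one_add_div_mul_le (hf0 u) (hg0 u) ht)

end LogIntegral

/-- For convex bodies `K, L ⊆ ℝ³` containing the origin in their interiors, the
function `F(t) = (1/3)∫_{S²} log((h_L + t h_K)/h_K) h_K dS_K − V(K) log((V(L+tK)/V(K))^{1/3})`
tends to `0` as `t → +∞`. -/
theorem limit_of_F_at_top
    (K L : Set (EuclideanSpace ℝ (Fin 3)))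
    (hKc : IsCompact K) (hKconv : Convex ℝ K) (hKint : (interior K).Nonempty)
    (hLc : IsCompact L) (hLconv : Convex ℝ L) (hLint : (interior L).Nonempty)
    (hK0 : (0 : EuclideanSpace ℝ (Fin 3)) ∈ interior K)
    (hL0 : (0 : EuclideanSpace ℝ (Fin 3)) ∈ interior L)
    (μ : Measure (sphere (0 : EuclideanSpace ℝ (Fin 3)) 1)) (hμfin : IsFiniteMeasure μ)
    (hμ : ∀ M : Set (EuclideanSpace ℝ (Fin 3)),
      IsCompact M → Convex ℝ M → (interior M).Nonempty →
        Filter.Tendsto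
          (fun t : ℝ => ((volume (K + t • M)).toReal - (volume K).toReal) / t)
          (nhdsWithin 0 (Set.Ioi 0))
          (nhds (∫ u : sphere (0 : EuclideanSpace ℝ (Fin 3)) 1, supp M u ∂μ)))
    :
    Filter.Tendsto
      (fun t : ℝ =>
        (1 / 3) * (∫ u : sphere (0 : EuclideanSpace ℝ (Fin 3)) 1,
            Real.log ((supp L u + t * supp K u) / supp K u) * supp K u ∂μ)
          - (volume K).toReal *
              Real.log (((volume (L + t • K)).toReal / (volume K).toReal) ^ ((1 : ℝ) / 3)))
      Filter.atTop (nhds 0) := by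
  have hKpos (u : sphere (0 : EuclideanSpace ℝ (Fin 3)) 1) : 0 < supp K u :=
    supp_pos hKc hK0 (ne_zero_of_mem_unit_sphere u)
  have hLnonneg (u : sphere (0 : EuclideanSpace ℝ (Fin 3)) 1) : 0 ≤ supp L u :=
    supp_nonneg hLc (interior_subset hL0) u
  have hKi := integrable_supp_comp_subtype hKc μ
  have hLi := integrable_supp_comp_subtype hLc μ
  set V := (volume K).toReal
  have hVpos : 0 < V := ENNReal.toReal_pos
    (Measure.measure_pos_of_nonempty_interior _ hKint).ne' hKc.measure_lt_top.ne
  have hIK : ∫ u, supp K u ∂μ = 3 * V := tendsto_nhds_unique (hμ K hKc hKconv hKint) <| by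
    simpa using tendsto_addHaar_add_smul_self_sub_div volume hKconv
  have hΦ : Tendsto (fun t : ℝ => (volume (K + t⁻¹ • L)).toReal) atTop (𝓝 V) :=
    (tendsto_nhdsGT_of_tendsto_sub_div (hμ L hLc hLconv hLint)).comp
      tendsto_inv_atTop_nhdsGT_zero
  have hlim := ((tendsto_integral_log_one_add_div_mul_atTop hLi hLnonneg hKpos).const_mul
    (1 / 3)).sub (((hΦ.div_const V).log (div_ne_zero hVpos.ne' hVpos.ne')).const_mul (V / 3))
  rw [div_self hVpos.ne', Real.log_one, mul_zero, mul_zero, sub_zero] at hlim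
  refine hlim.congr' ?_
  filter_upwards [eventually_gt_atTop 0, hΦ.eventually (lt_mem_nhds hVpos)] with t ht hΦt
  rw [integral_log_add_mul_div_mul hLi hKi hLnonneg hKpos ht, hIK,
    toReal_addHaar_add_smul_eq_pow_mul volume K L ht, finrank_euclideanSpace_fin,
    Real.log_rpow (by positivity), mul_div_assoc, Real.log_mul (by positivity) (by positivity),
    Real.log_pow]
  push_cast
  ring
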